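/- arXiv:2307.12391 — 3 statements merged into one kernel-verified Lean document; each statement's English description precedes it below -/
import Mathlib

section
/- Let L be a join-semilattice and let Sp(L) be the set of ideals of L topologized so that the sets supp(a) = {I | a ∉ I}, a ∈ L, form a basis of closed sets. For any topological space X and any support datum σ : L → Cl(X) (a map with σ(0) = ∅ and σ(a ∨ b) = σ(a) ∪ σ(b)), there exists a unique continuous map f : X → Sp(L) such that σ(a) = f⁻¹(supp(a)) for all a ∈ L. -/
/-- `I` is an ideal of the join-semilattice `L`: it contains the bottom element,
is closed under binary joins, and is downward closed. -/
def IsIdeal {L : Type*} [SemilatticeSup L] [OrderBot L] (I : Set L) : Prop :=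
  ⊥ ∈ I ∧ (∀ a ∈ I, ∀ b ∈ I, a ⊔ b ∈ I) ∧ ∀ a b : L, a ≤ b → b ∈ I → a ∈ I

/-- The space `Sp(L)` of ideals of the join-semilattice `L`. -/
def Sp (L : Type*) [SemilatticeSup L] [OrderBot L] := {I : Set L // IsIdeal I}

/-- `supp a = {I ∈ Sp(L) | a ∉ I}`. -/
def supp {L : Type*} [SemilatticeSup L] [OrderBot L] (a : L) : Set (Sp L) :=
  {I : Sp L | a ∉ I.1}

/-- The topology on `Sp(L)` for which the sets `supp a`, `a ∈ L`, form a basis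
of closed sets: the open sets are generated by the complements of the `supp a`. -/
instance (L : Type*) [SemilatticeSup L] [OrderBot L] : TopologicalSpace (Sp L) :=
  TopologicalSpace.generateFrom {U : Set (Sp L) | ∃ a : L, U = (supp a)ᶜ}

/-! The point `x` is sent to the ideal `{a | x ∉ σ a}`; this is forced, since an ideal is
determined by the sets `supp a` containing it, and it is continuous because the preimage of
the subbasic open set `(supp a)ᶜ` is the open set `(σ a)ᶜ`. -/

namespace Sp

variable {L : Type*} [SemilatticeSup L] [OrderBot L]

theorem ext_of_mem_supp {I J : Sp L} (h : ∀ a : L, I ∈ supp a ↔ J ∈ supp a) : I = J :=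
  Subtype.ext <| Set.ext fun a => not_iff_not.mp (h a)

theorem funext_of_preimage_supp {X : Type*} {f g : X → Sp L}
    (h : ∀ a : L, f ⁻¹' supp a = g ⁻¹' supp a) : f = g :=
  funext fun x => ext_of_mem_supp fun a => Set.ext_iff.mp (h a) x

theorem continuous_of_isClosed_preimage_supp {X : Type*} [TopologicalSpace X] {f : X → Sp L}
    (h : ∀ a : L, IsClosed (f ⁻¹' supp a)) : Continuous f :=
  continuous_generateFrom_iff.mpr fun _ ⟨a, hU⟩ => hU ▸ (h a).isOpen_compl

section SupportDatum

variable {X : Type*} (σ : L → Set X)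

theorem isIdeal_setOf_notMem (hbot : σ ⊥ = ∅) (hsup : ∀ a b : L, σ (a ⊔ b) = σ a ∪ σ b)
    (x : X) : IsIdeal {a : L | x ∉ σ a} := by
  have hmono : Monotone σ := OrderHomClass.mono (⟨σ, hsup⟩ : SupHom L (Set X))
  exact ⟨by simp [hbot], fun a ha b hb hab => (hsup a b ▸ hab).elim ha hb,
    fun a b hab hb ha => hb (hmono hab ha)⟩

def ofSupportDatum (hbot : σ ⊥ = ∅) (hsup : ∀ a b : L, σ (a ⊔ b) = σ a ∪ σ b) (x : X) : Sp L :=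
  ⟨{a | x ∉ σ a}, isIdeal_setOf_notMem σ hbot hsup x⟩

theorem ofSupportDatum_preimage_supp (hbot : σ ⊥ = ∅)
    (hsup : ∀ a b : L, σ (a ⊔ b) = σ a ∪ σ b) (a : L) :
    ofSupportDatum σ hbot hsup ⁻¹' supp a = σ a :=
  Set.ext fun _ => not_not

end SupportDatum

end Sp

theorem stmt3 {L : Type*} [SemilatticeSup L] [OrderBot L]
    {X : Type*} [TopologicalSpace X] (σ : L → Set X)
    (hclosed : ∀ a : L, IsClosed (σ a)) (hbot : σ ⊥ = ∅)
    (hsup : ∀ a b : L, σ (a ⊔ b) = σ a ∪ σ b) :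
    ∃! f : X → Sp L, Continuous f ∧ ∀ a : L, σ a = f ⁻¹' supp a := by
  refine ⟨Sp.ofSupportDatum σ hbot hsup,
    ⟨?_, fun a => (Sp.ofSupportDatum_preimage_supp σ hbot hsup a).symm⟩,
    fun g ⟨_, hg⟩ => Sp.funext_of_preimage_supp fun a => ?_⟩
  · exact Sp.continuous_of_isClosed_preimage_supp fun a =>
      Sp.ofSupportDatum_preimage_supp σ hbot hsup a ▸ hclosed a
  · rw [← hg, Sp.ofSupportDatum_preimage_supp]
end

section
/- Let T be an essentially small triangulated category. The assignment sending a thick subcategory S ⊆ T to {[X] ∈ L(T) | X ∈ S} is a lattice isomorphism from the lattice Thick(T) of thick subcategories of T onto the ideal lattice Id(L(T)). -/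
open CategoryTheory CategoryTheory.Limits CategoryTheory.Pretriangulated

variable (C : Type*) [Category C] [HasZeroObject C] [HasShift C ℤ] [Preadditive C]
  [∀ n : ℤ, (CategoryTheory.shiftFunctor C n).Additive] [Pretriangulated C]
  [HasBinaryBiproducts C]

/-- A thick subcategory of the triangulated category `C`, given by its class of objects:
it contains the zero objects, is closed under isomorphisms, shifts, extensions
(two-out-of-three for distinguished triangles) and direct summands (retracts). -/
def IsThick (S : Set C) : Prop :=
  (∀ X : C, IsZero X → X ∈ S) ∧
  (∀ X Y : C, (X ≅ Y) → X ∈ S → Y ∈ S) ∧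
  (∀ (X : C) (n : ℤ), X ∈ S → (CategoryTheory.shiftFunctor C n).obj X ∈ S) ∧
  (∀ T : Triangle C, T ∈ (distTriang C) → T.obj₁ ∈ S → T.obj₃ ∈ S → T.obj₂ ∈ S) ∧
  (∀ X Y : C, (∃ (i : X ⟶ Y) (r : Y ⟶ X), i ≫ r = 𝟙 X) → Y ∈ S → X ∈ S)

/-- The thick subcategory generated by an object. -/
def thickGen (X : C) : Set C := ⋂₀ {S : Set C | IsThick C S ∧ X ∈ S}

variable {C} in
/-- The equivalence relation `X ∼ Y` iff `[X] = [Y]`, where `[X]` denotes the thick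
subcategory generated by `X`. -/
def thickSetoid : Setoid C :=
  ⟨fun X Y => thickGen C X = thickGen C Y,
    fun _ => rfl, Eq.symm, Eq.trans⟩

/-- `L(T) = Ob T / ∼`. -/
def LQ := Quotient (thickSetoid (C := C))

variable {C} in
/-- The class `[X] ∈ L(T)` of an object `X`. -/
def cls (X : C) : LQ C := Quotient.mk thickSetoid X

/-- Ideals of the join-semilattice `L(T)` (ordered by `[X] ≤ [Y]` iff
`thickGen X ⊆ thickGen Y`, with join `[X] ∨ [Y] = [X ⊞ Y]` and bottom `[0]`):
downward closed subsets containing the bottom and closed under joins. -/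
def IsIdealQ (I : Set (LQ C)) : Prop :=
  (∀ Z : C, IsZero Z → cls Z ∈ I) ∧
  (∀ X Y : C, thickGen C X ⊆ thickGen C Y → cls Y ∈ I → cls X ∈ I) ∧
  (∀ X Y : C, cls X ∈ I → cls Y ∈ I → cls (X ⊞ Y) ∈ I)

section Aux

variable {C}

lemma isThick_thickGen (X : C) : IsThick C (thickGen C X) := by
  refine ⟨?_, ?_, ?_, ?_, ?_⟩
  · intro Z hZ
    exact Set.mem_sInter.2 fun S hS => hS.1.1 Z hZ
  · intro A B e hA
    exact Set.mem_sInter.2 fun S hS => hS.1.2.1 A B e (Set.mem_sInter.1 hA S hS)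
  · intro A n hA
    exact Set.mem_sInter.2 fun S hS => hS.1.2.2.1 A n (Set.mem_sInter.1 hA S hS)
  · intro T hT h1 h3
    exact Set.mem_sInter.2 fun S hS =>
      hS.1.2.2.2.1 T hT (Set.mem_sInter.1 h1 S hS) (Set.mem_sInter.1 h3 S hS)
  · intro A B hr hB
    exact Set.mem_sInter.2 fun S hS => hS.1.2.2.2.2 A B hr (Set.mem_sInter.1 hB S hS)

lemma self_mem_thickGen (X : C) : X ∈ thickGen C X :=
  Set.mem_sInter.2 fun _ hS => hS.2

lemma thickGen_subset {S : Set C} (hS : IsThick C S) {X : C} (hX : X ∈ S) :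
    thickGen C X ⊆ S :=
  Set.sInter_subset_of_mem ⟨hS, hX⟩

lemma thickGen_mono {X Y : C} (h : X ∈ thickGen C Y) : thickGen C X ⊆ thickGen C Y :=
  thickGen_subset (isThick_thickGen Y) h

lemma cls_eq_iff {X Y : C} : cls X = cls Y ↔ thickGen C X = thickGen C Y := by
  constructor
  · intro h; exact Quotient.exact h
  · intro h; exact Quotient.sound h

lemma mem_biprod_left (X Y : C) : X ∈ thickGen C (X ⊞ Y) :=
  (isThick_thickGen (X ⊞ Y)).2.2.2.2 X (X ⊞ Y)
    ⟨CategoryTheory.Limits.biprod.inl, CategoryTheory.Limits.biprod.fst,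
      CategoryTheory.Limits.biprod.inl_fst⟩ (self_mem_thickGen _)

lemma mem_biprod_right (X Y : C) : Y ∈ thickGen C (X ⊞ Y) :=
  (isThick_thickGen (X ⊞ Y)).2.2.2.2 Y (X ⊞ Y)
    ⟨CategoryTheory.Limits.biprod.inr, CategoryTheory.Limits.biprod.snd,
      CategoryTheory.Limits.biprod.inr_snd⟩ (self_mem_thickGen _)

lemma biprod_mem {S : Set C} (hS : IsThick C S) {X Y : C} (hX : X ∈ S) (hY : Y ∈ S) :
    (X ⊞ Y) ∈ S :=
  hS.2.2.2.1 (binaryBiproductTriangle X Y) (binaryBiproductTriangle_distinguished X Y) hX hY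

lemma mem_of_thick {S : Set C} (hS : IsThick C S) {X Y : C} (hXY : cls X = cls Y)
    (hY : Y ∈ S) : X ∈ S := by
  have : X ∈ thickGen C Y := cls_eq_iff.1 hXY ▸ self_mem_thickGen X
  exact thickGen_subset hS hY this

end Aux

theorem stmt15 :
    ∃ e : {S : Set C // IsThick C S} ≃o {I : Set (LQ C) // IsIdealQ C I},
      ∀ (S : {S : Set C // IsThick C S}) (X : C), cls X ∈ (e S).1 ↔ X ∈ S.1 := by
  -- forward map
  have key : ∀ (S : Set C), IsThick C S → ∀ X : C,
      (cls X ∈ {q : LQ C | ∃ Y, Y ∈ S ∧ q = cls Y} ↔ X ∈ S) := by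
    intro S hS X
    constructor
    · rintro ⟨Y, hY, hq⟩
      exact mem_of_thick hS hq hY
    · intro hX; exact ⟨X, hX, rfl⟩
  have fwd_ideal : ∀ (S : Set C), IsThick C S →
      IsIdealQ C {q : LQ C | ∃ Y, Y ∈ S ∧ q = cls Y} := by
    intro S hS
    refine ⟨?_, ?_, ?_⟩
    · intro Z hZ; exact ⟨Z, hS.1 Z hZ, rfl⟩
    · intro X Y hsub hY
      have hYS : Y ∈ S := (key S hS Y).1 hY
      exact (key S hS X).2 (thickGen_subset hS hYS (hsub (self_mem_thickGen X)))
    · intro X Y hX hY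
      exact (key S hS _).2 (biprod_mem hS ((key S hS X).1 hX) ((key S hS Y).1 hY))
  have bwd_thick : ∀ (I : Set (LQ C)), IsIdealQ C I → IsThick C {X : C | cls X ∈ I} := by
    intro I hI
    refine ⟨?_, ?_, ?_, ?_, ?_⟩
    · intro Z hZ; exact hI.1 Z hZ
    · intro X Y e hX
      have : cls Y = cls X := cls_eq_iff.2 (le_antisymm
        (thickGen_mono ((isThick_thickGen X).2.1 X Y e (self_mem_thickGen X)))
        (thickGen_mono ((isThick_thickGen Y).2.1 Y X e.symm (self_mem_thickGen Y))))
      simpa [Set.mem_setOf_eq, this] using hX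
    · intro X n hX
      exact hI.2.1 _ X
        (thickGen_mono ((isThick_thickGen X).2.2.1 X n (self_mem_thickGen X))) hX
    · intro T hT h1 h3
      have hb : cls (T.obj₁ ⊞ T.obj₃) ∈ I := hI.2.2 _ _ h1 h3
      refine hI.2.1 _ _ ?_ hb
      refine thickGen_mono ?_
      exact (isThick_thickGen (T.obj₁ ⊞ T.obj₃)).2.2.2.1 T hT
        (mem_biprod_left _ _) (mem_biprod_right _ _)
    · intro X Y hr hY
      exact hI.2.1 X Y
        (thickGen_mono ((isThick_thickGen Y).2.2.2.2 X Y hr (self_mem_thickGen Y))) hY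
  refine ⟨⟨⟨fun S => ⟨{q : LQ C | ∃ Y, Y ∈ S.1 ∧ q = cls Y}, fwd_ideal S.1 S.2⟩,
      fun I => ⟨{X : C | cls X ∈ I.1}, bwd_thick I.1 I.2⟩, ?_, ?_⟩, ?_⟩, ?_⟩
  · intro S
    ext X
    exact key S.1 S.2 X
  · intro I
    ext q
    obtain ⟨X, rfl⟩ := Quotient.exists_rep q
    constructor
    · rintro ⟨Y, hY, hq⟩
      have : cls X = cls Y := hq
      rw [show (Quotient.mk thickSetoid X : LQ C) = cls X from rfl, this]
      exact hY
    · intro h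
      exact ⟨X, h, rfl⟩
  · intro S S'
    constructor
    · intro h X hX
      exact (key S'.1 S'.2 X).1 (h ((key S.1 S.2 X).2 hX))
    · rintro h q ⟨Y, hY, hq⟩
      exact ⟨Y, h hY, hq⟩
  · intro S X
    exact key S.1 S.2 X
end

section
/- Let (T, ⊗) be a tensor triangulated category (monoidal structure, not necessarily symmetric, exact in each variable). For objects X, Y of T, the radical thick tensor ideals satisfy ⟨X⟩ ∩ ⟨Y⟩ = ⟨X ⊗ Y⟩, where ⟨Z⟩ denotes the radical thick tensor ideal generated by Z. -/
open CategoryTheory CategoryTheory.Limits CategoryTheory.Pretriangulated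
  CategoryTheory.MonoidalCategory

variable (C : Type*) [Category C] [HasZeroObject C] [HasShift C ℤ] [Preadditive C]
  [∀ n : ℤ, (CategoryTheory.shiftFunctor C n).Additive] [Pretriangulated C]
  [HasBinaryBiproducts C] [MonoidalCategory C]
  -- the monoidal structure is exact (triangulated) in each variable:
  [∀ X : C, (tensorLeft X).CommShift ℤ] [∀ X : C, (tensorLeft X).IsTriangulated]
  [∀ X : C, (tensorRight X).CommShift ℤ] [∀ X : C, (tensorRight X).IsTriangulated]

/-- A radical thick tensor ideal of `(C, ⊗)`: a thick subcategory `S` such that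
`X ⊗ Y ∈ S` whenever `X ∈ S` or `Y ∈ S`, and such that `X ⊗ X ∈ S` implies `X ∈ S`. -/
def IsRadThickTensorIdeal (S : Set C) : Prop :=
  IsThick C S ∧
  (∀ X Y : C, X ∈ S ∨ Y ∈ S → (X ⊗ Y) ∈ S) ∧
  (∀ X : C, (X ⊗ X) ∈ S → X ∈ S)

/-- `⟨X⟩`, the radical thick tensor ideal generated by `X`. -/
def rgen (X : C) : Set C := ⋂₀ {S : Set C | IsRadThickTensorIdeal C S ∧ X ∈ S}

set_option linter.unusedSectionVars false

section Helpers

variable {C}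

lemma mem_rgen_self (X : C) : X ∈ rgen C X := fun _ hS => hS.2

lemma rgen_subset {S : Set C} (hS : IsRadThickTensorIdeal C S) {X : C} (hX : X ∈ S) :
    rgen C X ⊆ S := fun _ hZ => hZ S ⟨hS, hX⟩

lemma isRad_rgen (X : C) : IsRadThickTensorIdeal C (rgen C X) := by
  refine ⟨⟨?_, ?_, ?_, ?_, ?_⟩, ?_, ?_⟩
  · intro Z hZ S hS; exact hS.1.1.1 Z hZ
  · intro Z W e hZ S hS; exact hS.1.1.2.1 Z W e (hZ S hS)
  · intro Z n hZ S hS; exact hS.1.1.2.2.1 Z n (hZ S hS)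
  · intro T hT h1 h3 S hS; exact hS.1.1.2.2.2.1 T hT (h1 S hS) (h3 S hS)
  · intro Z W hr hW S hS; exact hS.1.1.2.2.2.2 Z W hr (hW S hS)
  · intro Z W h S hS
    exact hS.1.2.1 Z W (h.imp (fun hz => hz S hS) (fun hw => hw S hS))
  · intro Z h S hS; exact hS.1.2.2 Z (h S hS)

/-- In a radical tensor ideal, `A ⊗ B ∈ S` implies `B ⊗ A ∈ S`. -/
lemma swap_mem {S : Set C} (hS : IsRadThickTensorIdeal C S) {A B : C} (h : A ⊗ B ∈ S) :
    B ⊗ A ∈ S := by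
  obtain ⟨⟨_, hiso, _, _, _⟩, hideal, hrad⟩ := hS
  apply hrad
  apply hiso (B ⊗ ((A ⊗ B) ⊗ A)) _
    ((whiskerLeftIso B (α_ A B A)) ≪≫ (α_ B A (B ⊗ A)).symm)
  exact hideal _ _ (Or.inr (hideal _ _ (Or.inl h)))

/-- Middle insertion: `A ⊗ B ∈ S` implies `(A ⊗ W) ⊗ B ∈ S`. -/
lemma mid_mem {S : Set C} (hS : IsRadThickTensorIdeal C S) {A B : C} (h : A ⊗ B ∈ S)
    (W : C) : (A ⊗ W) ⊗ B ∈ S := by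
  have hba : B ⊗ A ∈ S := swap_mem hS h
  obtain ⟨⟨_, hiso, _, _, _⟩, hideal, hrad⟩ := hS
  apply hrad
  apply hiso ((A ⊗ W) ⊗ (((B ⊗ A) ⊗ W) ⊗ B)) _
    ((whiskerLeftIso (A ⊗ W) ((whiskerRightIso (α_ B A W) B) ≪≫ α_ B (A ⊗ W) B)) ≪≫
      (α_ (A ⊗ W) B ((A ⊗ W) ⊗ B)).symm)
  exact hideal _ _ (Or.inr (hideal _ _ (Or.inl (hideal _ _ (Or.inl hba)))))

lemma mid_mem' {S : Set C} (hS : IsRadThickTensorIdeal C S) {A B : C} (h : A ⊗ B ∈ S)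
    (W : C) : A ⊗ (W ⊗ B) ∈ S :=
  hS.1.2.1 _ _ (α_ A W B) (mid_mem hS h W)

/-- `{B | X ⊗ B ∈ S}` is a radical thick tensor ideal. -/
lemma preL {S : Set C} (hS : IsRadThickTensorIdeal C S) (X : C) :
    IsRadThickTensorIdeal C {B : C | X ⊗ B ∈ S} := by
  obtain ⟨⟨hzero, hiso, hshift, htri, hretract⟩, hideal, hrad⟩ := hS
  have hS' : IsRadThickTensorIdeal C S :=
    ⟨⟨hzero, hiso, hshift, htri, hretract⟩, hideal, hrad⟩
  refine ⟨⟨?_, ?_, ?_, ?_, ?_⟩, ?_, ?_⟩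
  · intro Z hZ
    exact hzero _ ((tensorLeft X).map_isZero hZ)
  · intro Z W e hZ
    exact hiso _ _ (whiskerLeftIso X e) hZ
  · intro Z n hZ
    exact hiso _ _ (((tensorLeft X).commShiftIso n).app Z).symm (hshift _ n hZ)
  · intro T hT h1 h3
    exact htri _ ((tensorLeft X).map_distinguished T hT) h1 h3
  · intro Z W ⟨i, r, hir⟩ hW
    refine hretract _ _ ⟨X ◁ i, X ◁ r, ?_⟩ hW
    rw [← MonoidalCategory.whiskerLeft_comp, hir, MonoidalCategory.whiskerLeft_id]
  · intro Z W h
    refine hiso _ _ (α_ X Z W) ?_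
    rcases h with hZ | hW
    · exact hideal _ _ (Or.inl hZ)
    · exact mid_mem hS' hW Z
  · intro Z h
    apply hrad
    refine hiso _ _ (α_ (X ⊗ Z) X Z) ?_
    exact mid_mem hS' (hiso _ _ (α_ X Z Z).symm h) X

/-- `{A | A ⊗ Z ∈ S}` is a radical thick tensor ideal. -/
lemma preR {S : Set C} (hS : IsRadThickTensorIdeal C S) (Z : C) :
    IsRadThickTensorIdeal C {A : C | A ⊗ Z ∈ S} := by
  obtain ⟨⟨hzero, hiso, hshift, htri, hretract⟩, hideal, hrad⟩ := hS
  have hS' : IsRadThickTensorIdeal C S :=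
    ⟨⟨hzero, hiso, hshift, htri, hretract⟩, hideal, hrad⟩
  refine ⟨⟨?_, ?_, ?_, ?_, ?_⟩, ?_, ?_⟩
  · intro A hA
    exact hzero _ ((tensorRight Z).map_isZero hA)
  · intro A B e hA
    exact hiso _ _ (whiskerRightIso e Z) hA
  · intro A n hA
    exact hiso _ _ (((tensorRight Z).commShiftIso n).app A).symm (hshift _ n hA)
  · intro T hT h1 h3
    exact htri _ ((tensorRight Z).map_distinguished T hT) h1 h3
  · intro A B ⟨i, r, hir⟩ hB
    refine hretract _ _ ⟨i ▷ Z, r ▷ Z, ?_⟩ hB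
    rw [← MonoidalCategory.comp_whiskerRight, hir, MonoidalCategory.id_whiskerRight]
  · intro A B h
    refine hiso _ _ (α_ A B Z).symm ?_
    rcases h with hA | hB
    · exact mid_mem' hS' hA B
    · exact hideal _ _ (Or.inr hB)
  · intro A h
    apply hrad
    refine hiso _ _ (α_ A Z (A ⊗ Z)).symm ?_
    exact mid_mem' hS' (hiso _ _ (α_ A A Z) h) Z

end Helpers

theorem stmt16 (X Y : C) : rgen C X ∩ rgen C Y = rgen C (X ⊗ Y) := by
  apply Set.Subset.antisymm
  · rintro Z ⟨hZX, hZY⟩ S ⟨hS, hXY⟩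
    have hXZ : X ⊗ Z ∈ S :=
      rgen_subset (preL hS X) (show Y ∈ {B : C | X ⊗ B ∈ S} from hXY) hZY
    have hZZ : Z ⊗ Z ∈ S :=
      rgen_subset (preR hS Z) (show X ∈ {A : C | A ⊗ Z ∈ S} from hXZ) hZX
    exact hS.2.2 Z hZZ
  · intro Z hZ
    exact ⟨rgen_subset (isRad_rgen X)
        ((isRad_rgen X).2.1 X Y (Or.inl (mem_rgen_self X))) hZ,
      rgen_subset (isRad_rgen Y)
        ((isRad_rgen Y).2.1 X Y (Or.inr (mem_rgen_self Y))) hZ⟩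
end
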